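/- arXiv:cs/0703100 — 3 statements merged into one kernel-verified Lean document; each statement's English description precedes it below -/
import Mathlib

section
/- Let J be a finite set of n jobs, M a finite set of machines, and p : M × J → [0,1]. Define the mass of an assignment f : M → J ∪ {⊥} on job j as min(Σ_{i : f(i)=j} p(i,j), 1). The greedy algorithm that processes pairs (i,j) in nonincreasing order of p(i,j), assigning machine i to job j whenever i is still unassigned and the running sum Σ_{x : f(x)=j} p(x,j) + p(i,j) ≤ 1, produces an assignment whose total mass Σ_j Σ_{i: f(i)=j} p(i,j) is at least 1/3 of the maximum total mass achievable by any assignment f* : M → J ∪ {⊥} subject to Σ_{i : f*(i)=j} p(i,j) ≤ 1 for all j. -/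
attribute [local instance] Classical.propDecidable

/-- The mass of job `j` under assignment `f` (uncapped; the greedy algorithm
keeps it at most 1 by construction). -/
noncomputable def jobMass {m n : ℕ} (p : Fin m → Fin n → ℝ)
    (f : Fin m → Option (Fin n)) (j : Fin n) : ℝ :=
  ∑ i, if f i = some j then p i j else 0

/-- One step of the greedy algorithm MSM-ALG: for the pair `(i,j)`, assign
machine `i` to job `j` if `i` is unassigned and the running sum for `j`
would stay at most `1`. -/
noncomputable def greedyStep {m n : ℕ} (p : Fin m → Fin n → ℝ)
    (f : Fin m → Option (Fin n)) (q : Fin m × Fin n) : Fin m → Option (Fin n) :=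
  if f q.1 = none ∧ jobMass p f q.2 + p q.1 q.2 ≤ 1 then
    Function.update f q.1 (some q.2)
  else f

section Aux

variable {m n : ℕ} (p : Fin m → Fin n → ℝ)

lemma jobMass_nonneg (hp : ∀ i j, 0 ≤ p i j) (f : Fin m → Option (Fin n)) (j : Fin n) :
    0 ≤ jobMass p f j := by
  refine Finset.sum_nonneg fun i _ => ?_
  split
  · exact hp i j
  · exact le_refl 0

lemma jobMass_update (f : Fin m → Option (Fin n)) (i : Fin m) (j₀ : Fin n)
    (hf : f i = none) (j : Fin n) :
    jobMass p (Function.update f i (some j₀)) j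
      = jobMass p f j + (if j₀ = j then p i j else 0) := by
  unfold jobMass
  rw [← Finset.sum_erase_add _ _ (Finset.mem_univ i),
      ← Finset.sum_erase_add _ _ (Finset.mem_univ i)]
  have h1 : ∑ x ∈ Finset.univ.erase i,
      (if Function.update f i (some j₀) x = some j then p x j else 0)
      = ∑ x ∈ Finset.univ.erase i, (if f x = some j then p x j else 0) := by
    refine Finset.sum_congr rfl fun x hx => ?_
    rw [Function.update_of_ne (Finset.ne_of_mem_erase hx)]
  rw [h1, Function.update_self, hf]
  simp [add_assoc]

lemma jobMass_le_greedyStep (hp : ∀ i j, 0 ≤ p i j)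
    (f : Fin m → Option (Fin n)) (q : Fin m × Fin n) (j : Fin n) :
    jobMass p f j ≤ jobMass p (greedyStep p f q) j := by
  unfold greedyStep
  split
  · next h =>
    rw [jobMass_update p f q.1 q.2 h.1 j]
    have : (0:ℝ) ≤ if q.2 = j then p q.1 j else 0 := by
      split
      · exact hp q.1 j
      · exact le_refl 0
    linarith
  · exact le_refl _

lemma jobMass_le_foldl (hp : ∀ i j, 0 ≤ p i j)
    (L : List (Fin m × Fin n)) (f : Fin m → Option (Fin n)) (j : Fin n) :
    jobMass p f j ≤ jobMass p (L.foldl (greedyStep p) f) j := by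
  induction L generalizing f with
  | nil => exact le_refl _
  | cons q L ih =>
    exact le_trans (jobMass_le_greedyStep p hp f q j) (ih _)

lemma foldl_persist (L : List (Fin m × Fin n)) (f : Fin m → Option (Fin n))
    (i : Fin m) (j : Fin n) (hf : f i = some j) :
    (L.foldl (greedyStep p) f) i = some j := by
  induction L generalizing f with
  | nil => exact hf
  | cons q L ih =>
    refine ih _ ?_
    unfold greedyStep
    split
    · next h =>
      have hne : i ≠ q.1 := by
        intro heq
        rw [heq, h.1] at hf
        cases hf
      rw [Function.update_of_ne hne]
      exact hf
    · exact hf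

lemma foldl_mem (L : List (Fin m × Fin n)) (f : Fin m → Option (Fin n))
    (i : Fin m) (j : Fin n) (h : (L.foldl (greedyStep p) f) i = some j) :
    f i = some j ∨ (i, j) ∈ L := by
  induction L generalizing f with
  | nil => exact Or.inl h
  | cons q L ih =>
    rcases ih _ h with h' | h'
    · unfold greedyStep at h'
      split at h'
      · obtain ⟨a, b⟩ := q
        rcases eq_or_ne i a with rfl | hne
        · rw [Function.update_self] at h'
          have hb : b = j := by simpa using h'
          subst hb
          exact Or.inr (List.mem_cons_self)
        · rw [Function.update_of_ne hne] at h'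
          exact Or.inl h'
      · exact Or.inl h'
    · exact Or.inr (List.mem_cons_of_mem _ h')

/-- Key dichotomy: for any pair `(i,j)` in the list, either machine `i` ends up
assigned to a job at least as good as `j`, or job `j` is "heavy". -/
lemma key_dichotomy (hp : ∀ i j, p i j ∈ Set.Icc (0:ℝ) 1)
    (L : List (Fin m × Fin n))
    (hsorted : L.Pairwise fun a b => p b.1 b.2 ≤ p a.1 a.2)
    (q : Fin m × Fin n) (hq : q ∈ L) :
    (∃ j', (L.foldl (greedyStep p) fun _ => none) q.1 = some j' ∧ p q.1 q.2 ≤ p q.1 j')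
    ∨ 1 ≤ 2 * jobMass p (L.foldl (greedyStep p) fun _ => none) q.2 := by
  have hp0 : ∀ i j, 0 ≤ p i j := fun i j => (hp i j).1
  obtain ⟨L1, L2, rfl⟩ := List.append_of_mem hq
  set f0 : Fin m → Option (Fin n) := (fun _ => none) with hf0
  set ft := L1.foldl (greedyStep p) f0 with hft
  have hLg : (L1 ++ q :: L2).foldl (greedyStep p) f0
      = L2.foldl (greedyStep p) (greedyStep p ft q) := by
    rw [List.foldl_append, List.foldl_cons]
  have hsort' : ∀ a ∈ L1, p q.1 q.2 ≤ p a.1 a.2 := by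
    intro a ha
    exact (List.pairwise_append.mp hsorted).2.2 a ha q (List.mem_cons_self)
  by_cases hcond : ft q.1 = none ∧ jobMass p ft q.2 + p q.1 q.2 ≤ 1
  · left
    refine ⟨q.2, ?_, le_refl _⟩
    rw [hLg]
    refine foldl_persist p L2 _ q.1 q.2 ?_
    unfold greedyStep
    rw [if_pos hcond, Function.update_self]
  · cases hftq : ft q.1 with
    | some j' =>
      left
      refine ⟨j', ?_, ?_⟩
      · rw [hLg]
        refine foldl_persist p L2 _ q.1 j' ?_
        unfold greedyStep
        rw [if_neg hcond]
        exact hftq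
      · have hmem : (q.1, j') ∈ L1 := by
          rcases foldl_mem p L1 f0 q.1 j' hftq with h | h
          · exact absurd h (by simp [hf0])
          · exact h
        exact hsort' _ hmem
    | none =>
      right
      have hblock : 1 < jobMass p ft q.2 + p q.1 q.2 := by
        by_contra hle
        exact hcond ⟨hftq, le_of_not_gt hle⟩
      have hpos : 0 < jobMass p ft q.2 := by
        have := (hp q.1 q.2).2
        linarith
      obtain ⟨i', hi'⟩ : ∃ i', 0 < (if ft i' = some q.2 then p i' q.2 else 0) := by
        by_contra hall'
        push_neg at hall'
        have : jobMass p ft q.2 ≤ 0 := Finset.sum_nonpos fun i _ => hall' i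
        linarith
      have hfti' : ft i' = some q.2 := by
        by_contra hne
        rw [if_neg hne] at hi'
        exact lt_irrefl 0 hi'
      have hmem : (i', q.2) ∈ L1 := by
        rcases foldl_mem p L1 f0 i' q.2 hfti' with h | h
        · exact absurd h (by simp [hf0])
        · exact h
      have hle : p q.1 q.2 ≤ p i' q.2 := hsort' _ hmem
      have hsingle : p i' q.2 ≤ jobMass p ft q.2 := by
        have := Finset.single_le_sum
          (f := fun i => if ft i = some q.2 then p i q.2 else 0)
          (fun i _ => by
            show (0:ℝ) ≤ if ft i = some q.2 then p i q.2 else 0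
            split
            · exact hp0 i q.2
            · exact le_refl 0) (Finset.mem_univ i')
        simpa [hfti', jobMass] using this
      have hmono : jobMass p ft q.2
          ≤ jobMass p ((L1 ++ q :: L2).foldl (greedyStep p) f0) q.2 := by
        rw [hLg]
        exact le_trans (jobMass_le_greedyStep p hp0 ft q q.2)
          (jobMass_le_foldl p hp0 L2 _ q.2)
      linarith

lemma sum_jobMass (f : Fin m → Option (Fin n)) :
    ∑ j, jobMass p f j = ∑ i, (f i).elim 0 (fun j => p i j) := by
  unfold jobMass
  rw [Finset.sum_comm]
  refine Finset.sum_congr rfl fun i _ => ?_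
  cases hfi : f i with
  | none => simp [hfi]
  | some j₀ =>
    simp only [hfi, Option.elim, Option.some.injEq]
    rw [Finset.sum_ite_eq Finset.univ j₀ (fun j => p i j)]
    simp

end Aux

/-- MSM-ALG is a `1/3`-approximation for MaxSumMass: processing all pairs in
nonincreasing order of `p`, the greedy assignment's total mass is at least
`1/3` of that of any assignment `f*` with per-job mass at most `1`. -/
theorem greedy_third_approx (m n : ℕ) (p : Fin m → Fin n → ℝ)
    (hp : ∀ i j, p i j ∈ Set.Icc (0 : ℝ) 1)
    (L : List (Fin m × Fin n)) (hnd : L.Nodup) (hall : ∀ q, q ∈ L)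
    (hsorted : L.Pairwise fun a b => p b.1 b.2 ≤ p a.1 a.2)
    (fstar : Fin m → Option (Fin n)) (hfeas : ∀ j, jobMass p fstar j ≤ 1) :
    (1 / 3 : ℝ) * ∑ j, jobMass p fstar j ≤
      ∑ j, jobMass p (L.foldl (greedyStep p) fun _ => none) j := by
  set g := L.foldl (greedyStep p) fun _ => none with hg
  have hp0 : ∀ i j, 0 ≤ p i j := fun i j => (hp i j).1
  have hgnn : ∀ j, 0 ≤ jobMass p g j := fun j => jobMass_nonneg p hp0 g j
  set h : Fin m → ℝ := fun i => (g i).elim 0 (fun j => p i j) with hh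
  have hhnn : ∀ i, 0 ≤ h i := by
    intro i
    simp only [hh]
    cases g i with
    | none => exact le_refl 0
    | some j => exact hp0 i j
  have key : ∀ i j, fstar i = some j →
      (∃ j', g i = some j' ∧ p i j ≤ p i j') ∨ 1 ≤ 2 * jobMass p g j := by
    intro i j _
    exact key_dichotomy p hp L hsorted (i, j) (hall (i, j))
  set H : Finset (Fin n) := Finset.univ.filter (fun j => 1 ≤ 2 * jobMass p g j) with hH
  -- heavy part
  have hheavy : ∑ j ∈ H, jobMass p fstar j ≤ 2 * ∑ j, jobMass p g j := by
    calc ∑ j ∈ H, jobMass p fstar j ≤ ∑ j ∈ H, 2 * jobMass p g j := by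
          refine Finset.sum_le_sum fun j hj => ?_
          have := (Finset.mem_filter.mp hj).2
          linarith [hfeas j]
      _ ≤ ∑ j, 2 * jobMass p g j := by
          refine Finset.sum_le_sum_of_subset_of_nonneg (Finset.subset_univ H)
            fun j _ _ => by linarith [hgnn j]
      _ = 2 * ∑ j, jobMass p g j := by rw [Finset.mul_sum]
  -- light part
  have hlight : ∑ j ∈ Hᶜ, jobMass p fstar j ≤ ∑ j, jobMass p g j := by
    have step1 : ∀ j ∈ Hᶜ, jobMass p fstar j
        ≤ ∑ i, (if fstar i = some j then h i else 0) := by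
      intro j hj
      have hjH : ¬ (1 ≤ 2 * jobMass p g j) := by
        intro hcon
        exact (Finset.mem_compl.mp hj) (Finset.mem_filter.mpr ⟨Finset.mem_univ j, hcon⟩)
      unfold jobMass
      refine Finset.sum_le_sum fun i _ => ?_
      by_cases hfi : fstar i = some j
      · rw [if_pos hfi, if_pos hfi]
        rcases key i j hfi with ⟨j', hgj', hle⟩ | hcon
        · simp only [hh, hgj', Option.elim]
          exact hle
        · exact absurd hcon hjH
      · rw [if_neg hfi, if_neg hfi]
    calc ∑ j ∈ Hᶜ, jobMass p fstar j
        ≤ ∑ j ∈ Hᶜ, ∑ i, (if fstar i = some j then h i else 0) :=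
          Finset.sum_le_sum step1
      _ ≤ ∑ j, ∑ i, (if fstar i = some j then h i else 0) := by
          refine Finset.sum_le_sum_of_subset_of_nonneg (Finset.subset_univ _)
            fun j _ _ => Finset.sum_nonneg fun i _ => ?_
          split
          · exact hhnn i
          · exact le_refl 0
      _ = ∑ i, ∑ j, (if fstar i = some j then h i else 0) := Finset.sum_comm
      _ ≤ ∑ i, h i := by
          refine Finset.sum_le_sum fun i _ => ?_
          cases hfi : fstar i with
          | none => simp [hfi, hhnn i]
          | some j₀ =>
            simp only [hfi, Option.some.injEq]
            rw [Finset.sum_ite_eq Finset.univ j₀ (fun _ => h i)]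
            simp
      _ = ∑ j, jobMass p g j := (sum_jobMass p g).symm
  have hsplit : ∑ j, jobMass p fstar j
      = ∑ j ∈ H, jobMass p fstar j + ∑ j ∈ Hᶜ, jobMass p fstar j :=
    (Finset.sum_add_sum_compl H _).symm
  have : ∑ j, jobMass p fstar j ≤ 3 * ∑ j, jobMass p g j := by
    rw [hsplit]; linarith
  linarith
end

section
/- Let Σ be a schedule (a family of machine-to-job assignment functions indexed by the unfinished job set and time step) for a scheduling-under-uncertainty instance with expected makespan T. Then for any job j, in an execution of Σ for 2T steps, with probability at least 1/4 the accumulated mass of j — the sum over steps t ≤ 2T and machines i assigned to j at step t of p(i,j) — is at least 1/4. -/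
open MeasureTheory ProbabilityTheory
open scoped ENNReal
attribute [local instance] Classical.propDecidable

/-- Job `j` is eligible given the set `U` of unfinished jobs: all of its
predecessors in the precedence dag are finished. -/
def Eligible {n : ℕ} (prec : Fin n → Fin n → Prop) (U : Finset (Fin n))
    (j : Fin n) : Prop :=
  ∀ j', prec j' j → j' ∉ U

/-- The set of unfinished jobs at the start of step `t` (0-indexed), when the
schedule `f` (an assignment function for each unfinished-set and step) is
executed with success outcomes `X t i j ω` (machine `i` succeeds on job `j` at
step `t`).  A job completes at step `t` if it is unfinished, eligible, and some
machine assigned to it succeeds. -/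
noncomputable def unfinished {Ω : Type*} {n m : ℕ}
    (prec : Fin n → Fin n → Prop)
    (f : Finset (Fin n) → ℕ → Fin m → Option (Fin n))
    (X : ℕ → Fin m → Fin n → Ω → Bool) : ℕ → Ω → Finset (Fin n)
  | 0, _ => Finset.univ
  | t + 1, ω =>
    (unfinished prec f X t ω).filter fun j =>
      ¬(Eligible prec (unfinished prec f X t ω) j ∧
        ∃ i, f (unfinished prec f X t ω) t i = some j ∧ X t i j ω = true)

/-- Machine `i` is assigned to job `j` at step `t`: the schedule maps `i` to
`j`, and `j` is unfinished and eligible. -/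
noncomputable def Assigned {Ω : Type*} {n m : ℕ}
    (prec : Fin n → Fin n → Prop)
    (f : Finset (Fin n) → ℕ → Fin m → Option (Fin n))
    (X : ℕ → Fin m → Fin n → Ω → Bool) (t : ℕ) (ω : Ω) (i : Fin m)
    (j : Fin n) : Prop :=
  f (unfinished prec f X t ω) t i = some j ∧
    j ∈ unfinished prec f X t ω ∧ Eligible prec (unfinished prec f X t ω) j

/-- The mass accumulated by job `j` during the first `t` steps:
`Σ_{τ < t} Σ_{i assigned to j at step τ} p i j`. -/
noncomputable def mass {Ω : Type*} {n m : ℕ} (p : Fin m → Fin n → ℝ)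
    (prec : Fin n → Fin n → Prop)
    (f : Finset (Fin n) → ℕ → Fin m → Option (Fin n))
    (X : ℕ → Fin m → Fin n → Ω → Bool) (j : Fin n) (t : ℕ) (ω : Ω) : ℝ :=
  ∑ τ ∈ Finset.range t, ∑ i,
    if Assigned prec f X τ ω i j then p i j else 0

/-- The makespan of an execution: the first step by which all jobs are
finished (`∞` if they never all finish). -/
noncomputable def makespan {Ω : Type*} {n m : ℕ}
    (prec : Fin n → Fin n → Prop)
    (f : Finset (Fin n) → ℕ → Fin m → Option (Fin n))
    (X : ℕ → Fin m → Fin n → Ω → Bool) (ω : Ω) : ℝ≥0∞ :=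
  ⨅ t ∈ {t : ℕ | unfinished prec f X t ω = ∅}, (t : ℝ≥0∞)

section Aux

variable {Ω Ω' : Type*} {n m : ℕ}
  {prec : Fin n → Fin n → Prop}
  {f : Finset (Fin n) → ℕ → Fin m → Option (Fin n)}

lemma unfinished_congr {X : ℕ → Fin m → Fin n → Ω → Bool}
    {Y : ℕ → Fin m → Fin n → Ω' → Bool} {ω : Ω} {ω' : Ω'} {t : ℕ}
    (h : ∀ τ, τ < t → ∀ i k, X τ i k ω = Y τ i k ω') :
    unfinished prec f X t ω = unfinished prec f Y t ω' := by
  induction t with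
  | zero => rfl
  | succ t ih =>
    have ht : unfinished prec f X t ω = unfinished prec f Y t ω' :=
      ih (fun τ hτ => h τ (Nat.lt_succ_of_lt hτ))
    have hX : ∀ i k, X t i k ω = Y t i k ω' := h t (Nat.lt_succ_self t)
    simp only [unfinished, ht]
    apply Finset.filter_congr
    intro k _
    simp only [hX]

lemma Assigned_congr {X : ℕ → Fin m → Fin n → Ω → Bool}
    {Y : ℕ → Fin m → Fin n → Ω' → Bool} {ω : Ω} {ω' : Ω'} {t : ℕ}
    (h : ∀ τ, τ < t → ∀ i k, X τ i k ω = Y τ i k ω') (i : Fin m) (k : Fin n) :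
    Assigned prec f X t ω i k ↔ Assigned prec f Y t ω' i k := by
  unfold Assigned
  rw [unfinished_congr h]

lemma mass_congr {p : Fin m → Fin n → ℝ} {X : ℕ → Fin m → Fin n → Ω → Bool}
    {Y : ℕ → Fin m → Fin n → Ω' → Bool} {ω : Ω} {ω' : Ω'} {t : ℕ}
    (h : ∀ τ, τ + 1 < t → ∀ i k, X τ i k ω = Y τ i k ω') (k : Fin n) :
    mass p prec f X k t ω = mass p prec f Y k t ω' := by
  unfold mass
  refine Finset.sum_congr rfl fun τ hτ => Finset.sum_congr rfl fun i _ => ?_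
  rw [Finset.mem_range] at hτ
  exact if_congr (Assigned_congr (fun τ' hτ' i' k' => h τ' (by omega) i' k') i k) rfl rfl

lemma unfinished_succ_subset (X : ℕ → Fin m → Fin n → Ω → Bool) (t : ℕ) (ω : Ω) :
    unfinished prec f X (t + 1) ω ⊆ unfinished prec f X t ω := by
  simp only [unfinished]
  exact Finset.filter_subset _ _

lemma unfinished_mono (X : ℕ → Fin m → Fin n → Ω → Bool) {s t : ℕ} (hst : s ≤ t) (ω : Ω) :
    unfinished prec f X t ω ⊆ unfinished prec f X s ω := by
  induction t with
  | zero => cases Nat.le_zero.mp hst; exact subset_rfl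
  | succ t ih =>
    rcases Nat.lt_or_ge s (t + 1) with hlt | hge
    · exact (unfinished_succ_subset X t ω).trans (ih (Nat.lt_succ_iff.mp hlt))
    · cases le_antisymm hst hge; exact subset_rfl

lemma mass_mono {p : Fin m → Fin n → ℝ} (hp : ∀ i k, 0 ≤ p i k)
    (X : ℕ → Fin m → Fin n → Ω → Bool) (k : Fin n) {s t : ℕ} (hst : s ≤ t) (ω : Ω) :
    mass p prec f X k s ω ≤ mass p prec f X k t ω := by
  apply Finset.sum_le_sum_of_subset_of_nonneg (Finset.range_subset_range.mpr hst)
  intro τ _ _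
  refine Finset.sum_nonneg fun i _ => ?_
  split_ifs
  · exact hp i k
  · exact le_rfl

lemma exists_completion {X : ℕ → Fin m → Fin n → Ω → Bool} {ω : Ω} {k : Fin n} {N : ℕ}
    (h : k ∉ unfinished prec f X N ω) :
    ∃ t, t < N ∧ k ∈ unfinished prec f X t ω ∧
      Eligible prec (unfinished prec f X t ω) k ∧
      ∃ i, f (unfinished prec f X t ω) t i = some k ∧ X t i k ω = true := by
  induction N with
  | zero => exact absurd (Finset.mem_univ k) h
  | succ N ih =>
    by_cases hN : k ∈ unfinished prec f X N ω
    · have hcc : ¬¬(Eligible prec (unfinished prec f X N ω) k ∧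
          ∃ i, f (unfinished prec f X N ω) N i = some k ∧ X N i k ω = true) := by
        intro hc
        exact h (by simp only [unfinished, Finset.mem_filter]; exact ⟨hN, hc⟩)
      obtain ⟨h1, h2⟩ := not_not.mp hcc
      exact ⟨N, Nat.lt_succ_self N, hN, h1, h2⟩
    · obtain ⟨t, ht, h1, h2, h3⟩ := ih hN
      exact ⟨t, Nat.lt_succ_of_lt ht, h1, h2, h3⟩

lemma makespan_ge {X : ℕ → Fin m → Fin n → Ω → Bool} {ω : Ω} {N : ℕ}
    (h : unfinished prec f X N ω ≠ ∅) :
    ((N : ℝ≥0∞) + 1) ≤ makespan prec f X ω := by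
  refine le_iInf₂ fun t ht => ?_
  have ht' : unfinished prec f X t ω = ∅ := ht
  have htN : N < t := by
    by_contra hc
    push_neg at hc
    exact h (Finset.subset_empty.mp (ht' ▸ unfinished_mono X hc ω))
  have : ((N + 1 : ℕ) : ℝ≥0∞) ≤ (t : ℝ≥0∞) := Nat.cast_le.mpr htN
  simpa using this

/-- index set of the history before step `t` -/
def histIdx (m n t : ℕ) : Finset (ℕ × Fin m × Fin n) :=
  Finset.range t ×ˢ Finset.univ

lemma mem_histIdx {t : ℕ} {q : ℕ × Fin m × Fin n} :
    q ∈ histIdx m n t ↔ q.1 < t := by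
  simp [histIdx, Finset.mem_product]

/-- reconstruct an outcome family from a history vector -/
noncomputable def recon (t : ℕ) (v : ↥(histIdx m n t) → Bool) :
    ℕ → Fin m → Fin n → Unit → Bool :=
  fun τ i k _ => if h : (τ, i, k) ∈ histIdx m n t then v ⟨(τ, i, k), h⟩ else false

lemma recon_tup {X : ℕ → Fin m → Fin n → Ω → Bool} {t : ℕ} {ω : Ω}
    {τ : ℕ} (hτ : τ < t) (i : Fin m) (k : Fin n) :
    recon t (fun q : ↥(histIdx m n t) => X q.1.1 q.1.2.1 q.1.2.2 ω) τ i k () =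
      X τ i k ω := by
  simp only [recon]
  rw [dif_pos (mem_histIdx.mpr hτ)]

lemma event_eq_preimage {X : ℕ → Fin m → Fin n → Ω → Bool}
    (p : Fin m → Fin n → ℝ) (k : Fin n) (t s : ℕ) (hs : s ≤ t + 1)
    (P : Finset (Fin n) → ℝ → Prop) :
    {ω | P (unfinished prec f X t ω) (mass p prec f X k s ω)} =
      (fun ω (q : ↥(histIdx m n t)) => X q.1.1 q.1.2.1 q.1.2.2 ω) ⁻¹'
        {v | P (unfinished prec f (recon t v) t ())
              (mass p prec f (recon t v) k s ())} := by
  ext ω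
  simp only [Set.mem_setOf_eq, Set.mem_preimage]
  rw [unfinished_congr (X := X) (Y := recon t _)
        (fun τ hτ i k' => (recon_tup hτ i k').symm),
      mass_congr (X := X) (Y := recon t _)
        (fun τ hτ i k' => (recon_tup (by omega) i k').symm) k]

section Meas
variable [MeasurableSpace Ω]

lemma measurable_tup {X : ℕ → Fin m → Fin n → Ω → Bool}
    (hXmeas : ∀ t i k, Measurable (X t i k)) (t : ℕ) :
    Measurable (fun ω (q : ↥(histIdx m n t)) => X q.1.1 q.1.2.1 q.1.2.2 ω) :=
  measurable_pi_lambda _ fun q => hXmeas _ _ _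

lemma hist_event_measurable {X : ℕ → Fin m → Fin n → Ω → Bool}
    (hXmeas : ∀ t i k, Measurable (X t i k))
    (p : Fin m → Fin n → ℝ) (k : Fin n) (t s : ℕ) (hs : s ≤ t + 1)
    (P : Finset (Fin n) → ℝ → Prop) :
    MeasurableSet {ω | P (unfinished prec f X t ω) (mass p prec f X k s ω)} := by
  rw [event_eq_preimage p k t s hs P]
  exact measurable_tup hXmeas t (Set.toFinite _).measurableSet

end Meas

lemma sum_if_partial_lt {a : ℕ → ℝ} (ha : ∀ t, 0 ≤ a t) {c : ℝ} (hc : 0 ≤ c) (N : ℕ) :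
    ∑ t ∈ Finset.range N,
      (if (∑ τ ∈ Finset.range (t + 1), a τ) < c then a t else 0) ≤ c := by
  rw [← Finset.sum_filter]
  set P := (Finset.range N).filter
      (fun t => (∑ τ ∈ Finset.range (t + 1), a τ) < c) with hP
  rcases P.eq_empty_or_nonempty with h | h
  · rw [h, Finset.sum_empty]; exact hc
  · have ht₀ : P.max' h ∈ P := P.max'_mem h
    have hsub : P ⊆ Finset.range (P.max' h + 1) := fun x hx =>
      Finset.mem_range.mpr (Nat.lt_succ_of_le (P.le_max' x hx))
    calc ∑ t ∈ P, a t ≤ ∑ t ∈ Finset.range (P.max' h + 1), a t :=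
          Finset.sum_le_sum_of_subset_of_nonneg hsub (fun t _ _ => ha t)
      _ ≤ c := le_of_lt (Finset.mem_filter.mp ht₀).2

end Aux

/-- **Mass accumulation.**  Let `Σ` be a schedule for an SUU instance (jobs
with an acyclic precedence relation, machines with independent Bernoulli
success outcomes `X t i j` of probability `p i j`) whose expected makespan is
`T`.  Then for any job `j`, in an execution of `Σ` for `2T` steps, with
probability at least `1/4` the accumulated mass of `j` is at least `1/4`. -/


theorem mass_accumulation (Ω : Type*) [MeasurableSpace Ω] (μ : Measure Ω)
    [IsProbabilityMeasure μ] (n m : ℕ) (p : Fin m → Fin n → ℝ)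
    (hp : ∀ i j, p i j ∈ Set.Icc (0 : ℝ) 1)
    (prec : Fin n → Fin n → Prop) (hacyc : ∀ j, ¬Relation.TransGen prec j j)
    (f : Finset (Fin n) → ℕ → Fin m → Option (Fin n))
    (X : ℕ → Fin m → Fin n → Ω → Bool)
    (hXmeas : ∀ t i j, Measurable (X t i j))
    (hXp : ∀ t i j, μ {ω | X t i j ω = true} = ENNReal.ofReal (p i j))
    (hXindep : iIndepFun
      (fun q : ℕ × Fin m × Fin n => X q.1 q.2.1 q.2.2) μ)
    (T : ℝ) (hT : 0 ≤ T)
    (hmk : ∫⁻ ω, makespan prec f X ω ∂μ = ENNReal.ofReal T)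
    (j : Fin n) :
    1 / 4 ≤ μ {ω | (1 / 4 : ℝ) ≤ mass p prec f X j ⌈2 * T⌉₊ ω} := by
  classical
  set N := ⌈2 * T⌉₊ with hNdef
  set B : ℕ → Fin m → Set Ω := fun t i =>
    {ω | j ∈ unfinished prec f X t ω ∧
      Eligible prec (unfinished prec f X t ω) j ∧
      f (unfinished prec f X t ω) t i = some j ∧
      mass p prec f X j (t + 1) ω < 1 / 4} with hBdef
  -- measurability facts
  have hBad0meas : MeasurableSet {ω | unfinished prec f X N ω ≠ ∅} :=
    hist_event_measurable hXmeas p j N N (Nat.le_succ N) (fun U _ => U ≠ ∅)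
  have hBmeas : ∀ t i, MeasurableSet (B t i) := fun t i =>
    hist_event_measurable hXmeas p j t (t + 1) le_rfl
      (fun U r => j ∈ U ∧ Eligible prec U j ∧ f U t i = some j ∧ r < 1 / 4)
  have hMmeas : MeasurableSet {ω | mass p prec f X j N ω < 1 / 4} :=
    hist_event_measurable hXmeas p j N N (Nat.le_succ N) (fun _ r => r < 1 / 4)
  -- Markov : the probability that some job is unfinished at step N is ≤ 1/2
  have hmark : μ {ω | unfinished prec f X N ω ≠ ∅} ≤ 1 / 2 := by
    have hpt : ∀ ω, Set.indicator {ω | unfinished prec f X N ω ≠ ∅}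
        (fun _ => ((N : ℝ≥0∞) + 1)) ω ≤ makespan prec f X ω := by
      intro ω
      by_cases h : unfinished prec f X N ω ≠ ∅
      · rw [Set.indicator_of_mem
          (show ω ∈ {ω | unfinished prec f X N ω ≠ ∅} from h)]
        exact makespan_ge h
      · rw [Set.indicator_of_notMem
          (show ω ∉ {ω | unfinished prec f X N ω ≠ ∅} from h)]
        exact zero_le
    have h1 : ((N : ℝ≥0∞) + 1) * μ {ω | unfinished prec f X N ω ≠ ∅}
        ≤ ENNReal.ofReal T := by
      rw [← hmk, ← lintegral_indicator_const hBad0meas]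
      exact lintegral_mono hpt
    have h2 : ENNReal.ofReal T ≤ 2⁻¹ * ((N : ℝ≥0∞) + 1) := by
      have hle : ENNReal.ofReal (2 * T) ≤ (N : ℝ≥0∞) := by
        rw [← ENNReal.ofReal_natCast N]
        exact ENNReal.ofReal_le_ofReal (Nat.le_ceil _)
      have h2T : ENNReal.ofReal (2 * T) = 2 * ENNReal.ofReal T := by
        rw [ENNReal.ofReal_mul (by norm_num : (0:ℝ) ≤ 2), ENNReal.ofReal_ofNat]
      calc ENNReal.ofReal T = 2⁻¹ * (2 * ENNReal.ofReal T) := by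
            rw [← mul_assoc, ENNReal.inv_mul_cancel (by norm_num) (by norm_num),
              one_mul]
        _ ≤ 2⁻¹ * ((N : ℝ≥0∞) + 1) := by
            gcongr
            rw [← h2T]
            exact hle.trans le_self_add
    have h3 := h1.trans h2
    rw [mul_comm ((N : ℝ≥0∞) + 1)] at h3
    rw [one_div]
    rwa [ENNReal.mul_le_mul_iff_left (by simp) (by simp [ENNReal.add_eq_top])] at h3
  -- independence step
  have hBC : ∀ (t : ℕ) (i : Fin m),
      μ (B t i ∩ {ω | X t i j ω = true}) = μ (B t i) * ENNReal.ofReal (p i j) := by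
    intro t i
    have hBpre : B t i =
        (fun ω (q : ↥(histIdx m n t)) => X q.1.1 q.1.2.1 q.1.2.2 ω) ⁻¹'
          {v | j ∈ unfinished prec f (recon t v) t () ∧
            Eligible prec (unfinished prec f (recon t v) t ()) j ∧
            f (unfinished prec f (recon t v) t ()) t i = some j ∧
            mass p prec f (recon t v) j (t + 1) () < 1 / 4} := by
      rw [hBdef]
      exact event_eq_preimage p j t (t + 1) le_rfl
        (fun U r => j ∈ U ∧ Eligible prec U j ∧ f U t i = some j ∧ r < 1 / 4)
    have hdisj : Disjoint (histIdx m n t) ({(t, i, j)} : Finset (ℕ × Fin m × Fin n)) := by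
      rw [Finset.disjoint_singleton_right]
      simp [mem_histIdx]
    have hind := hXindep.indepFun_finset (histIdx m n t) {(t, i, j)} hdisj
      (fun q => hXmeas q.1 q.2.1 q.2.2)
    rw [indepFun_iff_measure_inter_preimage_eq_mul] at hind
    have key := hind
      {v | j ∈ unfinished prec f (recon t v) t () ∧
        Eligible prec (unfinished prec f (recon t v) t ()) j ∧
        f (unfinished prec f (recon t v) t ()) t i = some j ∧
        mass p prec f (recon t v) j (t + 1) () < 1 / 4}
      {v : ↥({(t, i, j)} : Finset (ℕ × Fin m × Fin n)) → Bool |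
        v ⟨(t, i, j), Finset.mem_singleton_self _⟩ = true}
      (Set.toFinite _).measurableSet (Set.toFinite _).measurableSet
    rw [← hXp t i j, hBpre]
    exact key
  -- cover
  have hcover : {ω | mass p prec f X j N ω < 1 / 4} ⊆
      {ω | unfinished prec f X N ω ≠ ∅} ∪
        ⋃ t ∈ Finset.range N, ⋃ i, (B t i ∩ {ω | X t i j ω = true}) := by
    intro ω hω
    by_cases hU : unfinished prec f X N ω ≠ ∅
    · exact Or.inl hU
    · push_neg at hU
      have hj : j ∉ unfinished prec f X N ω := by
        rw [hU]; exact Finset.notMem_empty j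
      obtain ⟨t, htN, h1, h2, i, h3, h4⟩ := exists_completion hj
      have hmlt : mass p prec f X j (t + 1) ω < 1 / 4 :=
        lt_of_le_of_lt (mass_mono (fun i' k' => (hp i' k').1) X j htN ω) hω
      have hBmem : ω ∈ B t i := by
        rw [hBdef]
        exact ⟨h1, h2, h3, hmlt⟩
      exact Or.inr (Set.mem_biUnion (Finset.mem_range.mpr htN)
        (Set.mem_iUnion.mpr ⟨i, hBmem, h4⟩))
  -- union bound
  have hub : μ {ω | mass p prec f X j N ω < 1 / 4} ≤
      μ {ω | unfinished prec f X N ω ≠ ∅} +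
        ∑ t ∈ Finset.range N, ∑ i, μ (B t i ∩ {ω | X t i j ω = true}) := by
    refine (measure_mono hcover).trans ((measure_union_le _ _).trans ?_)
    gcongr
    refine (measure_biUnion_finset_le _ _).trans ?_
    gcongr with t
    exact measure_iUnion_fintype_le μ _
  -- the sum of masses bound
  have hsum : ∑ t ∈ Finset.range N, ∑ i, μ (B t i) * ENNReal.ofReal (p i j) ≤
      ENNReal.ofReal (1 / 4) := by
    have hrw : ∀ (t : ℕ) (i : Fin m), μ (B t i) * ENNReal.ofReal (p i j) =
        ∫⁻ ω, (B t i).indicator (fun _ => ENNReal.ofReal (p i j)) ω ∂μ := by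
      intro t i
      rw [lintegral_indicator_const (hBmeas t i), mul_comm]
    calc ∑ t ∈ Finset.range N, ∑ i, μ (B t i) * ENNReal.ofReal (p i j)
        = ∫⁻ ω, ∑ t ∈ Finset.range N, ∑ i,
            (B t i).indicator (fun _ => ENNReal.ofReal (p i j)) ω ∂μ := by
          rw [lintegral_finset_sum _
            (fun t _ => Finset.measurable_sum _
              (fun i _ => measurable_const.indicator (hBmeas t i)))]
          refine Finset.sum_congr rfl fun t _ => ?_
          rw [lintegral_finset_sum _
            (fun i _ => measurable_const.indicator (hBmeas t i))]
          exact Finset.sum_congr rfl fun i _ => hrw t i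
      _ ≤ ∫⁻ _, ENNReal.ofReal (1 / 4) ∂μ := by
          refine lintegral_mono fun ω => ?_
          have hterm : ∀ (t : ℕ) (i : Fin m),
              (B t i).indicator (fun _ => ENNReal.ofReal (p i j)) ω =
              ENNReal.ofReal (if ω ∈ B t i then p i j else 0) := by
            intro t i
            by_cases hb : ω ∈ B t i
            · rw [Set.indicator_of_mem hb, if_pos hb]
            · rw [Set.indicator_of_notMem hb, if_neg hb, ENNReal.ofReal_zero]
          have hnn : ∀ (t : ℕ), ∀ i ∈ (Finset.univ : Finset (Fin m)),
              (0:ℝ) ≤ if ω ∈ B t i then p i j else 0 := by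
            intro t i _
            split_ifs
            · exact (hp i j).1
            · exact le_rfl
          simp only [hterm]
          rw [show ∑ t ∈ Finset.range N, ∑ i,
                ENNReal.ofReal (if ω ∈ B t i then p i j else 0)
              = ENNReal.ofReal (∑ t ∈ Finset.range N, ∑ i,
                if ω ∈ B t i then p i j else 0) by
            rw [ENNReal.ofReal_sum_of_nonneg
              (fun t _ => Finset.sum_nonneg (hnn t))]
            exact Finset.sum_congr rfl fun t _ =>
              (ENNReal.ofReal_sum_of_nonneg (hnn t)).symm]
          apply ENNReal.ofReal_le_ofReal
          -- the pointwise real bound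
          set a : ℕ → ℝ :=
            fun τ => ∑ i, if Assigned prec f X τ ω i j then p i j else 0 with ha
          have hanonneg : ∀ τ, 0 ≤ a τ := by
            intro τ
            refine Finset.sum_nonneg fun i _ => ?_
            split_ifs
            · exact (hp i j).1
            · exact le_rfl
          have hmass : ∀ s : ℕ, mass p prec f X j s ω = ∑ τ ∈ Finset.range s, a τ :=
            fun s => rfl
          have key : ∀ t ∈ Finset.range N,
              (∑ i, if ω ∈ B t i then p i j else 0) ≤
              (if (∑ τ ∈ Finset.range (t + 1), a τ) < 1 / 4 then a t else 0) := by
            intro t _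
            by_cases hm : (∑ τ ∈ Finset.range (t + 1), a τ) < 1 / 4
            · rw [if_pos hm, ha]
              refine Finset.sum_le_sum fun i _ => ?_
              by_cases hb : ω ∈ B t i
              · rw [hBdef] at hb
                rw [if_pos (hBdef ▸ hb), if_pos ⟨hb.2.2.1, hb.1, hb.2.1⟩]
              · rw [if_neg hb]
                split_ifs
                · exact (hp i j).1
                · exact le_rfl
            · rw [if_neg hm]
              refine le_of_eq (Finset.sum_eq_zero fun i _ => ?_)
              rw [if_neg]
              intro hb
              rw [hBdef] at hb
              exact hm (by rw [← hmass (t + 1)]; exact hb.2.2.2)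
          exact (Finset.sum_le_sum key).trans
            (sum_if_partial_lt hanonneg (by norm_num) N)
      _ = ENNReal.ofReal (1 / 4) := by
          rw [lintegral_const, measure_univ, mul_one]
  -- combining
  have e4 : ENNReal.ofReal (1 / 4 : ℝ) = 1 / 4 := by
    rw [ENNReal.ofReal_div_of_pos (by norm_num)]; norm_num
  have hlt : μ {ω | mass p prec f X j N ω < 1 / 4} ≤ 1 / 2 + 1 / 4 := by
    refine hub.trans (add_le_add hmark ?_)
    rw [← e4]
    refine le_trans (le_of_eq ?_) hsum
    exact Finset.sum_congr rfl fun t _ => Finset.sum_congr rfl fun i _ => hBC t i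
  have hcompl : {ω | (1 / 4 : ℝ) ≤ mass p prec f X j N ω} =
      {ω | mass p prec f X j N ω < 1 / 4}ᶜ := by
    ext ω
    simp [not_lt]
  have hadd : μ {ω | mass p prec f X j N ω < 1 / 4} +
      μ {ω | mass p prec f X j N ω < 1 / 4}ᶜ = 1 := by
    rw [measure_add_measure_compl hMmeas, measure_univ]
  rw [hcompl]
  have h1le : (1 : ℝ≥0∞) ≤ (1 / 2 + 1 / 4) +
      μ {ω | mass p prec f X j N ω < 1 / 4}ᶜ :=
    calc (1 : ℝ≥0∞) = μ {ω | mass p prec f X j N ω < 1 / 4} +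
          μ {ω | mass p prec f X j N ω < 1 / 4}ᶜ := hadd.symm
      _ ≤ _ := add_le_add_left hlt _
  have harith : (1 : ℝ≥0∞) / 2 + 1 / 4 + 1 / 4 = 1 := by
    rw [add_assoc, ENNReal.div_add_div_same,
      show (1:ℝ≥0∞)+1 = 2*1 by norm_num,
      show (4:ℝ≥0∞) = 2*2 by norm_num,
      ENNReal.mul_div_mul_left _ _ (by norm_num) (by norm_num),
      ENNReal.div_add_div_same, show (1:ℝ≥0∞)+1 = 2 by norm_num,
      ENNReal.div_self (by norm_num) (by norm_num)]
  refine ENNReal.le_of_add_le_add_left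
    (show (1:ℝ≥0∞)/2 + 1/4 ≠ ⊤ by
      simp [ENNReal.add_eq_top, ENNReal.div_eq_top]) ?_
  calc (1:ℝ≥0∞)/2 + 1/4 + 1/4 = 1 := harith
    _ ≤ _ := h1le
end

section
/- Fix a step t and a machine i in a pseudo-schedule for chains with maximum machine load Π_max, where each chain's start is delayed by an independent uniform integer delay in [0, Π_max]. The probability that at least τ units of processing are scheduled on machine i at step t is at most (e·Π_max/τ)^τ · (1/Π_max)^τ = (e/τ)^τ; in particular, for τ = α·log(n+m)/log log(n+m) with α ≥ 2 this probability is less than (n+m)^{−(α−1)}. -/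
open MeasureTheory ProbabilityTheory
open scoped ENNReal
attribute [local instance] Classical.propDecidable

section helpers

lemma esymm_step' {ι : Type*} [DecidableEq ι] (p : ι → ℝ≥0∞) (u : Finset ι) (τ : ℕ) :
    ((τ : ℝ≥0∞) + 1) * ∑ T ∈ u.powersetCard (τ + 1), ∏ j ∈ T, p j ≤
      (∑ k ∈ u, p k) * ∑ S ∈ u.powersetCard τ, ∏ j ∈ S, p j := by
  have key : ∑ T ∈ u.powersetCard (τ+1), ∑ k ∈ T, ∏ j ∈ T, p j
      = ∑ S ∈ u.powersetCard τ, ∑ k ∈ u \ S, (p k * ∏ j ∈ S, p j) := by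
    rw [Finset.sum_sigma', Finset.sum_sigma']
    refine Finset.sum_nbij' (fun x => ⟨x.1.erase x.2, x.2⟩)
      (fun x => ⟨insert x.2 x.1, x.2⟩) ?_ ?_ ?_ ?_ ?_
    · rintro ⟨T, k⟩ hx
      simp only [Finset.mem_sigma, Finset.mem_powersetCard] at hx ⊢
      obtain ⟨⟨hTu, hTc⟩, hkT⟩ := hx
      refine ⟨⟨(Finset.erase_subset _ _).trans hTu, ?_⟩, ?_⟩
      · rw [Finset.card_erase_of_mem hkT, hTc]; rfl
      · simp [Finset.mem_sdiff, hTu hkT]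
    · rintro ⟨S, k⟩ hx
      simp only [Finset.mem_sigma, Finset.mem_powersetCard, Finset.mem_sdiff] at hx ⊢
      obtain ⟨⟨hSu, hSc⟩, hku, hkS⟩ := hx
      refine ⟨⟨Finset.insert_subset hku hSu, ?_⟩, Finset.mem_insert_self _ _⟩
      rw [Finset.card_insert_of_notMem hkS, hSc]
    · rintro ⟨T, k⟩ hx
      simp only [Finset.mem_sigma, Finset.mem_powersetCard] at hx
      simp [Finset.insert_erase hx.2]
    · rintro ⟨S, k⟩ hx
      simp only [Finset.mem_sigma, Finset.mem_powersetCard, Finset.mem_sdiff] at hx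
      simp [Finset.erase_insert hx.2.2]
    · rintro ⟨T, k⟩ hx
      simp only [Finset.mem_sigma, Finset.mem_powersetCard] at hx
      exact (Finset.mul_prod_erase T p hx.2).symm
  have l1 : ((τ : ℝ≥0∞) + 1) * ∑ T ∈ u.powersetCard (τ+1), ∏ j ∈ T, p j
      = ∑ T ∈ u.powersetCard (τ+1), ∑ k ∈ T, ∏ j ∈ T, p j := by
    rw [Finset.mul_sum]
    refine Finset.sum_congr rfl fun T hT => ?_
    rw [Finset.sum_const, nsmul_eq_mul]
    congr 1
    rw [(Finset.mem_powersetCard.mp hT).2]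
    push_cast; ring
  rw [l1, key]
  calc ∑ S ∈ u.powersetCard τ, ∑ k ∈ u \ S, (p k * ∏ j ∈ S, p j)
      ≤ ∑ S ∈ u.powersetCard τ, ∑ k ∈ u, (p k * ∏ j ∈ S, p j) := by
        refine Finset.sum_le_sum fun S hS => ?_
        exact Finset.sum_le_sum_of_subset (Finset.sdiff_subset)
    _ = (∑ k ∈ u, p k) * ∑ S ∈ u.powersetCard τ, ∏ j ∈ S, p j := by
        rw [Finset.mul_sum]
        refine Finset.sum_congr rfl fun S hS => ?_
        rw [← Finset.sum_mul]

lemma esymm_le' {ι : Type*} [DecidableEq ι] (p : ι → ℝ≥0∞) (u : Finset ι) :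
    ∀ τ : ℕ, (τ.factorial : ℝ≥0∞) * ∑ S ∈ u.powersetCard τ, ∏ j ∈ S, p j
      ≤ (∑ k ∈ u, p k) ^ τ
  | 0 => by simp
  | (τ+1) => by
    have h1 := esymm_step' p u τ
    have h2 := esymm_le' p u τ
    calc ((τ+1).factorial : ℝ≥0∞) * ∑ S ∈ u.powersetCard (τ+1), ∏ j ∈ S, p j
        = (τ.factorial : ℝ≥0∞) * (((τ : ℝ≥0∞) + 1) *
            ∑ S ∈ u.powersetCard (τ+1), ∏ j ∈ S, p j) := by
          rw [← mul_assoc, Nat.factorial_succ]; push_cast; ring_nf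
      _ ≤ (τ.factorial : ℝ≥0∞) * ((∑ k ∈ u, p k) * ∑ S ∈ u.powersetCard τ, ∏ j ∈ S, p j) :=
          mul_le_mul_right h1 _
      _ = (∑ k ∈ u, p k) * ((τ.factorial : ℝ≥0∞) * ∑ S ∈ u.powersetCard τ, ∏ j ∈ S, p j) := by
          ring
      _ ≤ (∑ k ∈ u, p k) * (∑ k ∈ u, p k) ^ τ := mul_le_mul_right h2 _
      _ = (∑ k ∈ u, p k) ^ (τ+1) := by ring

lemma pow_lt_exp_mul_factorial' (τ : ℕ) (hτ : 1 ≤ τ) :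
    (τ : ℝ) ^ τ < Real.exp 1 ^ τ * τ.factorial := by
  have hne : (0:ℕ) ≠ τ := by omega
  have hsub : ({0, τ} : Finset ℕ) ⊆ Finset.range (τ+1) := by
    intro x hx; simp only [Finset.mem_insert, Finset.mem_singleton] at hx
    rcases hx with rfl | rfl <;> simp [Nat.lt_succ_iff]
  have h1 : (1:ℝ) + (τ:ℝ)^τ / τ.factorial
      ≤ ∑ i ∈ Finset.range (τ+1), (τ:ℝ)^i / i.factorial := by
    have := Finset.sum_le_sum_of_subset_of_nonneg hsub
      (f := fun i => (τ:ℝ)^i / i.factorial)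
      (fun i _ _ => by positivity)
    rw [Finset.sum_pair hne] at this
    simpa using this
  have h2 : ∑ i ∈ Finset.range (τ+1), (τ:ℝ)^i / i.factorial ≤ Real.exp τ :=
    Real.sum_le_exp_of_nonneg (by positivity) _
  have h3 : (τ:ℝ)^τ / τ.factorial < Real.exp τ := by
    have hf : (0:ℝ) < τ.factorial := by positivity
    nlinarith
  have hexp : Real.exp (τ:ℝ) = Real.exp 1 ^ τ := by
    rw [← Real.exp_nat_mul]; norm_num
  have hf : (0:ℝ) < τ.factorial := by positivity
  calc (τ:ℝ)^τ = ((τ:ℝ)^τ / τ.factorial) * τ.factorial := by field_simp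
    _ < Real.exp τ * τ.factorial := by nlinarith
    _ = Real.exp 1 ^ τ * τ.factorial := by rw [hexp]

lemma pow_le_exp_mul_factorial' (τ : ℕ) :
    (τ : ℝ) ^ τ ≤ Real.exp 1 ^ τ * τ.factorial := by
  rcases Nat.eq_zero_or_pos τ with rfl | h
  · norm_num
  · exact (pow_lt_exp_mul_factorial' τ h).le

lemma rpow_lt_factorial' (N α : ℝ) (hN : 3 ≤ N) (hα : 2 ≤ α) (τ : ℕ)
    (hτ : (τ:ℝ) = α * Real.log N / Real.log (Real.log N)) :
    N ^ (α - 1) < (τ.factorial : ℝ) ∧ 1 ≤ τ := by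
  set lN := Real.log N with hlN_def
  set L := Real.log lN with hL_def
  have hNpos : (0:ℝ) < N := by linarith
  have hlN : 1 < lN := by
    rw [hlN_def, Real.lt_log_iff_exp_lt hNpos]
    have := Real.exp_one_lt_d9
    linarith
  have hL : 0 < L := Real.log_pos hlN
  have hα0 : (0:ℝ) < α := by linarith
  have hlNpos : (0:ℝ) < lN := by linarith
  have hτpos : (0:ℝ) < τ := by
    rw [hτ]; positivity
  have hτ1 : 1 ≤ τ := by exact_mod_cast Nat.one_le_iff_ne_zero.mpr (by
    intro h; rw [h] at hτpos; norm_num at hτpos)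
  have hlogτ : Real.log τ = Real.log α + L - Real.log L := by
    rw [hτ, Real.log_div (by positivity) hL.ne', Real.log_mul hα0.ne' hlNpos.ne']
  have keyA : α * (1 + Real.log L - Real.log α) ≤ L := by
    have h := Real.log_le_sub_one_of_pos (show (0:ℝ) < L/α by positivity)
    rw [Real.log_div hL.ne' hα0.ne'] at h
    have hq : α * (L/α) = L := by field_simp
    nlinarith
  have key : (α - 1) * lN ≤ (τ:ℝ) * Real.log τ - τ := by
    have h2 : (τ:ℝ) * Real.log τ - τ - (α-1)*lN
        = (lN/L) * (L - α*(1 + Real.log L - Real.log α)) := by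
      rw [hlogτ, hτ]; field_simp; ring
    nlinarith [mul_nonneg (le_of_lt (div_pos hlNpos hL)) (sub_nonneg.2 keyA)]
  refine ⟨?_, hτ1⟩
  have h1 : N ^ (α - 1) = Real.exp ((α-1) * lN) := by
    rw [Real.rpow_def_of_pos hNpos, hlN_def]; ring_nf
  have h2 : Real.exp ((τ:ℝ) * Real.log τ - τ) = (τ:ℝ)^τ / Real.exp τ := by
    rw [Real.exp_sub, Real.exp_nat_mul, Real.exp_log hτpos]
  have h3 : (τ:ℝ)^τ / Real.exp τ < τ.factorial := by
    have := pow_lt_exp_mul_factorial' τ hτ1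
    have hexp : Real.exp ((τ:ℝ)) = Real.exp 1 ^ τ := by
      rw [← Real.exp_nat_mul]; norm_num
    rw [div_lt_iff₀ (Real.exp_pos _)]
    rw [hexp]; nlinarith [Real.exp_pos (1:ℝ), pow_pos (Real.exp_pos (1:ℝ)) τ]
  calc N ^ (α-1) = Real.exp ((α-1) * lN) := h1
    _ ≤ Real.exp ((τ:ℝ) * Real.log τ - τ) := Real.exp_le_exp.2 key
    _ = (τ:ℝ)^τ / Real.exp τ := h2
    _ < τ.factorial := h3

end helpers

/-- Random-delay analysis.  A pseudo-schedule for `K` chains places, for each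
chain `k`, units of processing on a fixed machine `i` at the steps in `A k`
(jobs from the same chain are never on the same machine at the same step, so
each chain contributes at most one unit per step); the total load is at most
`Π_max`.  Each chain is delayed by an independent integer delay uniform on
`[0, Π_max]`.  Then for any step `t`, the probability that at least `τ` units
are scheduled on the machine at step `t` is at most
`(e·Π_max/τ)^τ · (1/Π_max)^τ = (e/τ)^τ`; in particular, for
`τ = α·log(n+m)/log log(n+m)` with `α ≥ 2`, it is less than `(n+m)^{-(α-1)}`. -/
theorem random_delay_congestion (Ω : Type*) [MeasurableSpace Ω]
    (μ : Measure Ω) [IsProbabilityMeasure μ]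
    (K Pimax : ℕ) (hPi : 1 ≤ Pimax) (A : Fin K → Finset ℕ)
    (hload : ∑ k, (A k).card ≤ Pimax)
    (D : Fin K → Ω → ℕ) (hDmeas : ∀ k, Measurable (D k))
    (hindep : iIndepFun D μ)
    (hrange : ∀ k ω, D k ω ≤ Pimax)
    (hunif : ∀ k, ∀ d ≤ Pimax, μ {ω | D k ω = d} = 1 / ((Pimax : ℝ≥0∞) + 1))
    (t τ : ℕ) (n m : ℕ) (hnm : 2 ≤ n + m) :
    μ {ω | τ ≤ (Finset.univ.filter fun k => ∃ s ∈ A k, s + D k ω = t).card} ≤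
        ENNReal.ofReal ((Real.exp 1 * Pimax / τ) ^ τ * (1 / (Pimax : ℝ)) ^ τ) ∧
      ∀ α : ℝ, 2 ≤ α →
        (τ : ℝ) = α * Real.log (n + m) / Real.log (Real.log (n + m)) →
        μ {ω | τ ≤ (Finset.univ.filter fun k => ∃ s ∈ A k, s + D k ω = t).card} <
          ENNReal.ofReal (((n : ℝ) + m) ^ (-(α - 1))) := by
  set E : Fin K → Set Ω := fun k => {ω | ∃ s ∈ A k, s + D k ω = t} with hE
  set Ev : Set Ω :=
    {ω | τ ≤ (Finset.univ.filter fun k => ∃ s ∈ A k, s + D k ω = t).card} with hEvdef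
  have hEv : Ev ⊆ ⋃ S ∈ Finset.univ.powersetCard τ, ⋂ k ∈ (S : Finset (Fin K)), E k := by
    intro ω hω
    obtain ⟨S, hSsub, hScard⟩ := Finset.exists_subset_card_eq hω
    refine Set.mem_biUnion (Finset.mem_powersetCard.mpr ⟨Finset.subset_univ _, hScard⟩) ?_
    refine Set.mem_iInter₂.mpr fun k hk => ?_
    exact (Finset.mem_filter.mp (hSsub hk)).2
  have hInd : ∀ S : Finset (Fin K), μ (⋂ k ∈ S, E k) = ∏ k ∈ S, μ (E k) := by
    intro S
    refine hindep.meas_biInter fun k _ => ?_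
    exact ⟨{d | ∃ s ∈ A k, s + d = t}, MeasurableSet.of_discrete, rfl⟩
  have hq : ∀ k, μ (E k) ≤ ((A k).card : ℝ≥0∞) * ((Pimax:ℝ≥0∞)+1)⁻¹ := by
    intro k
    have hsub : E k ⊆ ⋃ s ∈ A k, {ω | D k ω = t - s} := by
      rintro ω ⟨s, hs, hst⟩
      exact Set.mem_biUnion hs (by simp only [Set.mem_setOf_eq]; omega)
    calc μ (E k) ≤ ∑ s ∈ A k, μ {ω | D k ω = t - s} :=
          (measure_mono hsub).trans (measure_biUnion_finset_le _ _)
      _ ≤ ∑ _s ∈ A k, ((Pimax:ℝ≥0∞)+1)⁻¹ := by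
          refine Finset.sum_le_sum fun s _ => ?_
          by_cases h : t - s ≤ Pimax
          · rw [hunif k _ h, one_div]
          · have hemp : {ω | D k ω = t - s} = (∅ : Set Ω) := by
              ext ω
              simp only [Set.mem_setOf_eq, Set.mem_empty_iff_false, iff_false]
              intro hd; exact h (hd ▸ hrange k ω)
            simp [hemp]
      _ = ((A k).card : ℝ≥0∞) * ((Pimax:ℝ≥0∞)+1)⁻¹ := by
          rw [Finset.sum_const, nsmul_eq_mul]
  have hsum1 : ∑ k, μ (E k) ≤ 1 := by
    have hPt : ((Pimax:ℝ≥0∞)+1) ≠ ⊤ := by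
      simp [ENNReal.natCast_ne_top]
    calc ∑ k, μ (E k) ≤ ∑ k, ((A k).card : ℝ≥0∞) * ((Pimax:ℝ≥0∞)+1)⁻¹ :=
          Finset.sum_le_sum fun k _ => hq k
      _ = (∑ k, ((A k).card:ℝ≥0∞)) * ((Pimax:ℝ≥0∞)+1)⁻¹ := by rw [Finset.sum_mul]
      _ ≤ ((Pimax:ℝ≥0∞)+1) * ((Pimax:ℝ≥0∞)+1)⁻¹ := by
          refine mul_le_mul_left ?_ _
          calc (∑ k, ((A k).card:ℝ≥0∞)) = ((∑ k, (A k).card : ℕ) : ℝ≥0∞) := by push_cast; rfl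
            _ ≤ (Pimax : ℝ≥0∞) := by exact_mod_cast hload
            _ ≤ (Pimax:ℝ≥0∞) + 1 := le_self_add
      _ = 1 := ENNReal.mul_inv_cancel (lt_of_lt_of_le zero_lt_one le_add_self).ne' hPt
  have hmain : μ Ev ≤ ((τ.factorial : ℝ≥0∞))⁻¹ := by
    have h1 : μ Ev ≤ ∑ S ∈ Finset.univ.powersetCard τ, ∏ k ∈ S, μ (E k) := by
      refine (measure_mono hEv).trans ?_
      refine (measure_biUnion_finset_le _ _).trans ?_
      exact le_of_eq (Finset.sum_congr rfl fun S _ => hInd S)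
    refine h1.trans ?_
    rw [ENNReal.le_inv_iff_mul_le, mul_comm]
    calc (τ.factorial : ℝ≥0∞) * ∑ S ∈ Finset.univ.powersetCard τ, ∏ k ∈ S, μ (E k)
        ≤ (∑ k, μ (E k)) ^ τ := esymm_le' (fun k => μ (E k)) Finset.univ τ
      _ ≤ 1 := pow_le_one' hsum1 τ
  have e1 : ((τ.factorial:ℝ≥0∞))⁻¹ = ENNReal.ofReal ((τ.factorial:ℝ))⁻¹ := by
    rw [ENNReal.ofReal_inv_of_pos (by positivity), ENNReal.ofReal_natCast]
  constructor
  · refine hmain.trans ?_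
    rw [e1]
    apply ENNReal.ofReal_le_ofReal
    rcases Nat.eq_zero_or_pos τ with rfl | hτ1
    · norm_num
    · have hPiR : (0:ℝ) < Pimax := by exact_mod_cast hPi
      have hτR : (0:ℝ) < τ := by exact_mod_cast hτ1
      have heq : (Real.exp 1 * Pimax / τ)^τ * (1/(Pimax:ℝ))^τ = Real.exp 1 ^ τ / (τ:ℝ)^τ := by
        rw [← mul_pow, ← div_pow]
        congr 1
        field_simp
      rw [heq, le_div_iff₀ (by positivity)]
      have h := pow_le_exp_mul_factorial' τ
      have hf : (0:ℝ) < τ.factorial := by positivity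
      calc (τ.factorial:ℝ)⁻¹ * (τ:ℝ)^τ
          ≤ (τ.factorial:ℝ)⁻¹ * (Real.exp 1 ^ τ * τ.factorial) := by
            exact mul_le_mul_of_nonneg_left h (by positivity)
        _ = Real.exp 1 ^ τ := by field_simp
  · intro α hα hτeq
    by_cases h3 : 3 ≤ n + m
    · have hN3 : (3:ℝ) ≤ (n:ℝ)+(m:ℝ) := by exact_mod_cast h3
      obtain ⟨hlt, hτ1⟩ := rpow_lt_factorial' ((n:ℝ)+(m:ℝ)) α hN3 hα τ hτeq
      refine lt_of_le_of_lt hmain ?_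
      rw [e1]
      rw [ENNReal.ofReal_lt_ofReal_iff
        (by positivity : (0:ℝ) < ((n:ℝ)+(m:ℝ)) ^ (-(α-1)))]
      rw [Real.rpow_neg (by linarith : (0:ℝ) ≤ (n:ℝ)+(m:ℝ))]
      exact inv_strictAnti₀ (Real.rpow_pos_of_pos (by linarith) _) hlt
    · exfalso
      have h2 : n + m = 2 := by omega
      have hNR : ((n:ℝ)+(m:ℝ)) = 2 := by
        have : ((n+m : ℕ) : ℝ) = 2 := by rw [h2]; norm_num
        push_cast at this; linarith
      rw [hNR] at hτeq
      have hlog2pos : 0 < Real.log 2 := Real.log_pos (by norm_num)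
      have hlog2lt : Real.log 2 < 1 := by
        have := Real.log_two_lt_d9
        linarith
      have hLneg : Real.log (Real.log 2) < 0 := Real.log_neg hlog2pos hlog2lt
      have : (τ:ℝ) < 0 := by
        rw [hτeq]
        apply div_neg_of_pos_of_neg (by positivity) hLneg
      have h0 : (0:ℝ) ≤ (τ:ℝ) := Nat.cast_nonneg τ
      linarith
end
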